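/- Let N ≥ 1, m, a ∈ ℤ, and let τ be a radius with 0 < τ < 1−q. Then: (1) for every 1 ≤ i ≤ N and every z ∈ ℂ with |z| > τ, ∮_{γ_τ} dζ / ( G*(ζ | i, m, a) · (z − ζ) ) = ∑_{k=1}^N ∮_{γ_τ} z^{−k} / G*(ζ | i−k+1, m, a) dζ; and (2) for every 1 ≤ j ≤ N and every z ∈ ℂ with |z| > τ, ∮_{γ_τ} z^{N+1} / ( G*(ζ | N+1−j, m, a) · (z − ζ) ) dζ = ∑_{k=1}^N ∮_{γ_τ} z^{k} / G*(ζ | k−j+1, m, a) dζ. -/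

import Mathlib

open MeasureTheory ProbabilityTheory Complex
open scoped Real BigOperators Nat

noncomputable section

/-- Forward difference operator `∇f(x) = f(x+1) − f(x)`. -/
def nab (f : ℤ → ℂ) : ℤ → ℂ := fun x => f (x + 1) - f x

/-- Inverse difference: `∇⁻¹f(x) = ∑_{y<x} f(y)` (a `tsum`; for functions vanishing
to the left of some integer this is the finite sum of the paper). -/
def nabInv (f : ℤ → ℂ) : ℤ → ℂ := fun x => ∑' y : {y : ℤ // y < x}, f y.1

/-- `∇^k` for `k : ℤ`. -/
def nabIter (k : ℤ) (f : ℤ → ℂ) : ℤ → ℂ :=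
  if 0 ≤ k then nab^[k.toNat] f else nabInv^[(-k).toNat] f

/-- The negative binomial weight `w_m(x)`. -/
def wgt (q : ℝ) (m : ℕ) : ℤ → ℂ := fun x =>
  if 0 ≤ x then ((x.toNat + m - 1).choose x.toNat : ℂ) * ((1 : ℂ) - (q : ℂ)) ^ m * (q : ℂ) ^ x
  else 0

/-- Component `x_k` (1-based) of a vector `x : Fin N → ℤ`. -/
def vcomp {N : ℕ} (x : Fin N → ℤ) (k : ℕ) : ℤ :=
  if h : k - 1 < N then x ⟨k - 1, h⟩ else 0

/-- 1-based access to a finite tuple, extended by `0` out of range. -/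
def fext {d : ℕ} {α : Type*} [Zero α] (x : Fin d → α) : ℕ → α := fun k =>
  if h : 1 ≤ k ∧ k ≤ d then x ⟨k - 1, by omega⟩ else 0

/-- The growth function `𝐆(m,n)` built from weights `w`. -/
def growth (w : ℕ → ℕ → ℕ) : ℕ → ℕ → ℕ
  | 0, _ => 0
  | _ + 1, 0 => 0
  | m + 1, n + 1 => max (growth w m (n + 1)) (growth w (m + 1) n) + w (m + 1) (n + 1)
  termination_by m n => m + n

/-- Normalized contour integral `(1/(2πi)) ∮_{|z−c|=R} f(z) dz` (counterclockwise circle). -/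
def cint (c : ℂ) (R : ℝ) (f : ℂ → ℂ) : ℂ :=
  (2 * Real.pi * Complex.I)⁻¹ * (∮ z in C(c, R), f z)

/-- Iterated normalized contour integrals with centers `c` and radii `R`. -/
def multiCintC : (k : ℕ) → (c : Fin k → ℂ) → (R : Fin k → ℝ) → ((Fin k → ℂ) → ℂ) → ℂ
  | 0, _, _, f => f ![]
  | k + 1, c, R, f =>
      cint (c 0) (R 0) fun z =>
        multiCintC k (fun t => c t.succ) (fun t => R t.succ) fun w => f (Fin.cons z w)

/-- `G*(w | n, m, a)`. -/
def Gstar (q : ℝ) (n m a : ℤ) (w : ℂ) : ℂ :=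
  w ^ n * (1 - w) ^ (a + m) / (1 - w / (1 - (q : ℂ))) ^ m

/-- `G(w | n, m, a) = G*(w | n,m,a)/G*(1−√q | n,m,a)`. -/
def Gfun (q : ℝ) (n m a : ℤ) (w : ℂ) : ℂ :=
  Gstar q n m a w / Gstar q n m a (1 - (Real.sqrt q : ℂ))

/-- The block index `r` such that `n_{r−1} < i ≤ n_r`. -/
def blockIdx (n : ℕ → ℕ) (i : ℕ) : ℕ := sInf {r : ℕ | i ≤ n r}

/-- `r* = min{r, p−1}` for the block of `i`. -/
def rstar (p : ℕ) (n : ℕ → ℕ) (i : ℕ) : ℕ := min (blockIdx n i) (p - 1)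

/-- `m(i) = m_{r*}`. -/
def mOf (p : ℕ) (n m : ℕ → ℕ) (i : ℕ) : ℕ := m (rstar p n i)

/-- `a(i) = a_{r*}`. -/
def aOf (p : ℕ) (n : ℕ → ℕ) (a : ℕ → ℤ) (i : ℕ) : ℤ := a (rstar p n i)

/-- `n(i) = n_{r*}`. -/
def nOf (p : ℕ) (n : ℕ → ℕ) (i : ℕ) : ℕ := n (rstar p n i)

/-!
Write `1 / G*(ζ | n, m, a) = ζ ^ (-n) B(ζ)` with `B` holomorphic on `‖ζ‖ < 1 - q`. Expanding
`1 / (z - ζ)` as a geometric series in `ζ / z` up to order `N` produces the terms of the sum, plus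
the remainder `z ^ (-N) ζ ^ (N - i) B(ζ) / (z - ζ)`, which is holomorphic on the closed disc of
radius `τ` because `i ≤ N` and `τ < ‖z‖`; by Cauchy's theorem its integral vanishes. The second
identity is the first one for `i = N + 1 - j`, multiplied by `z ^ (N + 1)` and summed in reverse.
-/

open Finset Metric

theorem inv_sub_eq_sum_add {K : Type*} [Field K] {z ζ : K} (hz : z ≠ 0) (h : z - ζ ≠ 0)
    (N : ℕ) :
    (z - ζ)⁻¹ = ∑ k ∈ Icc 1 N, ζ ^ (k - 1) / z ^ k + ζ ^ N / z ^ N * (z - ζ)⁻¹ := by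
  induction N with
  | zero => simp
  | succ N ih =>
    conv_lhs => rw [ih]
    rw [sum_Icc_succ_top (by omega), Nat.add_sub_cancel, add_assoc]
    congr 1
    field_simp
    ring

theorem inv_Gstar (q : ℝ) (n m a : ℤ) (w : ℂ) :
    (Gstar q n m a w)⁻¹ = w ^ (-n) * (1 - w) ^ (-(a + m)) * (1 - w / (1 - (q : ℂ))) ^ m := by
  simp only [Gstar, div_eq_mul_inv, mul_inv, inv_inv, zpow_neg]

theorem inv_Gstar_mul_pow (q : ℝ) (n m a : ℤ) {w : ℂ} (hw : w ≠ 0) (e : ℕ) :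
    (Gstar q n m a w)⁻¹ * w ^ e = (Gstar q (n - e) m a w)⁻¹ := by
  rw [inv_Gstar, inv_Gstar, show -(n - (e : ℤ)) = -n + e by ring, zpow_add₀ hw, zpow_natCast]
  ring

theorem differentiableAt_inv_Gstar {q : ℝ} (hq : 0 < q) (n m a : ℤ) {w : ℂ}
    (hw : ‖w‖ < 1 - q) (hn : w ≠ 0 ∨ n ≤ 0) :
    DifferentiableAt ℂ (fun w => (Gstar q n m a w)⁻¹) w := by
  have hq' : ‖(1 - q : ℂ)‖ = 1 - q := by
    rw [← ofReal_one, ← ofReal_sub, norm_real, Real.norm_of_nonneg (by linarith [norm_nonneg w])]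
  have h₁ : 1 - w ≠ 0 := by
    rw [sub_ne_zero]
    rintro rfl
    rw [norm_one] at hw
    linarith
  have h₂ : 1 - w / (1 - q) ≠ 0 := by
    have hq₀ : (1 - q : ℂ) ≠ 0 := norm_pos_iff.mp (by linarith [norm_nonneg w])
    rw [sub_ne_zero, ne_comm, Ne, div_eq_one_iff_eq hq₀]
    rintro rfl
    linarith
  simp_rw [inv_Gstar]
  exact ((differentiableAt_id.zpow (hn.imp id neg_nonneg.mpr)).mul
    ((differentiableAt_const _ |>.sub differentiableAt_id).zpow (Or.inl h₁))).mul
    ((differentiableAt_const _ |>.sub (differentiableAt_id.div_const _)).zpow (Or.inl h₂))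

section CircleIntegral

variable {c : ℂ} {R : ℝ} {f g : ℂ → ℂ}

theorem cint_congr (hR : 0 ≤ R) (h : Set.EqOn f g (sphere c R)) : cint c R f = cint c R g := by
  rw [cint, cint, circleIntegral.integral_congr hR h]

theorem cint_add (hf : CircleIntegrable f c R) (hg : CircleIntegrable g c R) :
    cint c R (fun z => f z + g z) = cint c R f + cint c R g := by
  rw [cint, cint, cint, circleIntegral.integral_add hf hg, mul_add]

theorem cint_sum {ι : Type*} {s : Finset ι} {F : ι → ℂ → ℂ}
    (h : ∀ i ∈ s, CircleIntegrable (F i) c R) :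
    cint c R (fun z => ∑ i ∈ s, F i z) = ∑ i ∈ s, cint c R (F i) := by
  rw [cint, circleIntegral.integral_fun_sum h, mul_sum]
  rfl

theorem cint_const_mul (b : ℂ) : cint c R (fun z => b * f z) = b * cint c R f := by
  rw [cint, cint, circleIntegral.integral_const_mul, mul_left_comm]

theorem cint_eq_zero_of_differentiableOn (hR : 0 ≤ R)
    (hf : DifferentiableOn ℂ f (closedBall c R)) : cint c R f = 0 := by
  rw [cint, Complex.circleIntegral_eq_zero_of_differentiable_on_off_countable hR
    Set.countable_empty hf.continuousOn fun w hw =>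
      hf.differentiableAt (closedBall_mem_nhds_of_mem hw.1), mul_zero]

end CircleIntegral

section Gstar

variable {q : ℝ} (hq : 0 < q) (m a : ℤ) {τ : ℝ} (hτ0 : 0 < τ) (hτ : τ < 1 - q)
include hq hτ0 hτ

theorem circleIntegrable_const_div_Gstar (b : ℂ) (n : ℤ) :
    CircleIntegrable (fun ζ => b / Gstar q n m a ζ) 0 τ := by
  simp_rw [div_eq_mul_inv]
  refine ContinuousOn.circleIntegrable hτ0.le (continuousOn_const.mul fun ζ hζ => ?_)
  rw [mem_sphere_zero_iff_norm] at hζ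
  exact (differentiableAt_inv_Gstar hq n m a (hζ ▸ hτ)
    (Or.inl (norm_pos_iff.mp (hζ ▸ hτ0)))).continuousAt.continuousWithinAt

theorem cint_one_div_Gstar_mul_sub {i : ℤ} {N : ℕ} (hi : i ≤ N) {z : ℂ} (hz : τ < ‖z‖) :
    cint 0 τ (fun ζ => 1 / (Gstar q i m a ζ * (z - ζ)))
      = ∑ k ∈ Icc 1 N, cint 0 τ (fun ζ => z ^ (-(k : ℤ)) / Gstar q (i - k + 1) m a ζ) := by
  have hz0 : z ≠ 0 := norm_pos_iff.mp (hτ0.trans hz)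
  have hsub : ∀ ζ ∈ closedBall (0 : ℂ) τ, z - ζ ≠ 0 := fun ζ hζ => by
    rw [sub_ne_zero]
    rintro rfl
    exact (mem_closedBall_zero_iff.mp hζ).not_gt hz
  set rest := fun ζ => z ^ (-(N : ℤ)) * ((Gstar q (i - N) m a ζ)⁻¹ * (z - ζ)⁻¹)
  have hsplit : Set.EqOn (fun ζ => 1 / (Gstar q i m a ζ * (z - ζ)))
      (fun ζ => ∑ k ∈ Icc 1 N, z ^ (-(k : ℤ)) / Gstar q (i - k + 1) m a ζ + rest ζ)
      (sphere 0 τ) := by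
    intro ζ hζ
    have hζ0 : ζ ≠ 0 := norm_pos_iff.mp ((mem_sphere_zero_iff_norm.mp hζ) ▸ hτ0)
    simp only [rest]
    conv_lhs => rw [one_div, mul_inv,
      inv_sub_eq_sum_add hz0 (hsub ζ (sphere_subset_closedBall hζ)) N, mul_add, mul_sum]
    congr 1
    · refine sum_congr rfl fun k hk => ?_
      have hk : 1 ≤ k := (mem_Icc.mp hk).1
      rw [mul_div_assoc', inv_Gstar_mul_pow _ _ _ _ hζ0, zpow_neg, zpow_natCast,
        Nat.cast_sub hk, Nat.cast_one, sub_sub_eq_add_sub, add_sub_right_comm, div_eq_mul_inv,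
        div_eq_mul_inv, mul_comm]
    · rw [div_eq_mul_inv, ← mul_assoc, ← mul_assoc, inv_Gstar_mul_pow _ _ _ _ hζ0, zpow_neg,
        zpow_natCast]
      ring
  have hrest : DifferentiableOn ℂ rest (closedBall 0 τ) := fun ζ hζ => by
    have hζτ : ‖ζ‖ < 1 - q := (mem_closedBall_zero_iff.mp hζ).trans_lt hτ
    exact (((differentiableAt_inv_Gstar hq (i - N) m a hζτ (Or.inr (by omega))).mul
      (((differentiableAt_const z).sub differentiableAt_id).inv (hsub ζ hζ))).const_mul
      _).differentiableWithinAt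
  have hterms : ∀ k ∈ Icc 1 N,
      CircleIntegrable (fun ζ => z ^ (-(k : ℤ)) / Gstar q (i - k + 1) m a ζ) 0 τ :=
    fun k _ => circleIntegrable_const_div_Gstar hq m a hτ0 hτ _ _
  rw [cint_congr hτ0.le hsplit, cint_add (CircleIntegrable.fun_sum _ hterms)
    ((hrest.continuousOn.mono sphere_subset_closedBall).circleIntegrable hτ0.le), cint_sum hterms,
    cint_eq_zero_of_differentiableOn hτ0.le hrest, add_zero]

theorem cint_pow_div_Gstar_mul_sub {j : ℤ} {N : ℕ} (hj : 1 ≤ j) {z : ℂ} (hz : τ < ‖z‖) :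
    cint 0 τ (fun ζ => z ^ ((N : ℤ) + 1) / (Gstar q ((N : ℤ) + 1 - j) m a ζ * (z - ζ)))
      = ∑ k ∈ Icc 1 N, cint 0 τ (fun ζ => z ^ (k : ℤ) / Gstar q ((k : ℤ) - j + 1) m a ζ) := by
  have hz0 : z ≠ 0 := norm_pos_iff.mp (hτ0.trans hz)
  simp_rw [← mul_one_div (z ^ ((N : ℤ) + 1))]
  rw [cint_const_mul,
    cint_one_div_Gstar_mul_sub hq m a hτ0 hτ (by omega : (N : ℤ) + 1 - j ≤ N) hz, mul_sum]
  simp_rw [← cint_const_mul, ← mul_div_assoc, ← zpow_add₀ hz0]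
  refine sum_nbij' (fun k => N + 1 - k) (fun k => N + 1 - k) ?_ ?_ ?_ ?_ fun k hk => ?_
  iterate 4 · intro k hk; simp only [mem_Icc] at *; omega
  have hk : k ≤ N := (mem_Icc.mp hk).2
  rw [Nat.cast_sub (by omega)]
  push_cast
  congr 1
  funext ζ
  congr 2
  ring

end Gstar

theorem statement7_general
    (q : ℝ) (hq0 : 0 < q)
    (N : ℕ) (m a : ℤ) (τ : ℝ) (hτ0 : 0 < τ) (hτ : τ < 1 - q) :
    (∀ i : ℕ, 1 ≤ i → i ≤ N → ∀ z : ℂ, τ < ‖z‖ →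
      cint 0 τ (fun ζ => 1 / (Gstar q (i : ℤ) m a ζ * (z - ζ)))
        = ∑ k ∈ Finset.Icc 1 N,
            cint 0 τ (fun ζ => z ^ (-(k : ℤ)) / Gstar q ((i : ℤ) - k + 1) m a ζ))
    ∧ (∀ j : ℕ, 1 ≤ j → j ≤ N → ∀ z : ℂ, τ < ‖z‖ →
      cint 0 τ (fun ζ => z ^ ((N : ℤ) + 1) / (Gstar q ((N : ℤ) + 1 - j) m a ζ * (z - ζ)))
        = ∑ k ∈ Finset.Icc 1 N,
            cint 0 τ (fun ζ => z ^ (k : ℤ) / Gstar q ((k : ℤ) - j + 1) m a ζ)) :=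
  ⟨fun _ _ hiN _ hz => cint_one_div_Gstar_mul_sub hq0 m a hτ0 hτ (by exact_mod_cast hiN) hz,
    fun _ hj _ _ hz => cint_pow_div_Gstar_mul_sub hq0 m a hτ0 hτ (by exact_mod_cast hj) hz⟩

/-- (Lemma `lem:Gintegral` of the paper.)  Two contour-integral
identities on the circle `γ_τ`, `0 < τ < 1 − q`, valid for `|z| > τ`. -/
theorem statement7
    (q : ℝ) (hq0 : 0 < q) (hq1 : q < 1)
    (N : ℕ) (hN : 1 ≤ N) (m a : ℤ) (τ : ℝ) (hτ0 : 0 < τ) (hτ : τ < 1 - q) :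
    (∀ i : ℕ, 1 ≤ i → i ≤ N → ∀ z : ℂ, τ < ‖z‖ →
      cint 0 τ (fun ζ => 1 / (Gstar q (i : ℤ) m a ζ * (z - ζ)))
        = ∑ k ∈ Finset.Icc 1 N,
            cint 0 τ (fun ζ => z ^ (-(k : ℤ)) / Gstar q ((i : ℤ) - k + 1) m a ζ))
    ∧ (∀ j : ℕ, 1 ≤ j → j ≤ N → ∀ z : ℂ, τ < ‖z‖ →
      cint 0 τ (fun ζ => z ^ ((N : ℤ) + 1) / (Gstar q ((N : ℤ) + 1 - j) m a ζ * (z - ζ)))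
        = ∑ k ∈ Finset.Icc 1 N,
            cint 0 τ (fun ζ => z ^ (k : ℤ) / Gstar q ((k : ℤ) - j + 1) m a ζ)) :=
  statement7_general q hq0 N m a τ hτ0 hτ

end
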